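/- arXiv:2006.11917 — 8 statements merged into one kernel-verified Lean document; each statement's English description precedes it below -/
import Mathlib

section
/- Suppose the MDP is exchangeable: for every permutation σ of Fin N, every s ∈ S^N and a ∈ A, one has r̄(σ·s, a) = r̄(s, a), and P(·|σ·s, a) equals the pushforward of P(·|s, a) under the map t ↦ σ·t. Then the unique bounded measurable fixed point Q* of the Bellman optimality operator T is permutation invariant: Q*(σ·s, a) = Q*(s, a) for every permutation σ of Fin N, every s ∈ S^N and every a ∈ A. Consequently, for every s and σ, the set of greedy actions {a ∈ A : Q*(s,a) = max_{a'∈A} Q*(s,a')} coincides with {a ∈ A : Q*(σ·s, a) = max_{a'∈A} Q*(σ·s, a')}. -/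
open MeasureTheory ProbabilityTheory

/-- A function on `X × A` is bounded and measurable. -/
def BddMeas {X A : Type*} [MeasurableSpace X] [MeasurableSpace A]
    (Q : X × A → ℝ) : Prop :=
  Measurable Q ∧ ∃ M : ℝ, ∀ p : X × A, |Q p| ≤ M

/-- The Bellman optimality operator. -/
noncomputable def bellmanT {X A : Type*} [MeasurableSpace X] [MeasurableSpace A]
    (P : Kernel (X × A) X) (r : X × A → ℝ) (γ : ℝ) (Q : X × A → ℝ) :
    X × A → ℝ :=
  fun p => r p + γ * ∫ x', (⨆ a' : A, Q (x', a')) ∂(P p)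

/-- for an exchangeable MDP on the state space `S^N`, the unique bounded
measurable fixed point `Q*` of the Bellman optimality operator is permutation invariant,
and the sets of greedy actions at `s` and at `σ·s` coincide. -/
theorem statement1
    {S : Type*} [MeasurableSpace S] {N : ℕ} (hN : 1 ≤ N)
    {A : Type*} [Fintype A] [Nonempty A] [MeasurableSpace A] [MeasurableSingletonClass A]
    (P : Kernel ((Fin N → S) × A) (Fin N → S)) [IsMarkovKernel P]
    (r : (Fin N → S) × A → ℝ) (hr_meas : Measurable r)
    (Rmax : ℝ) (hr_bd : ∀ p, |r p| ≤ Rmax)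
    (γ : ℝ) (hγ0 : 0 < γ) (hγ1 : γ < 1)
    -- exchangeability of the reward
    (hr_exch : ∀ (σ : Equiv.Perm (Fin N)) (s : Fin N → S) (a : A),
      r (fun i => s (σ i), a) = r (s, a))
    -- exchangeability of the transition kernel:
    -- `P(·|σ·s,a)` is the pushforward of `P(·|s,a)` under `t ↦ σ·t`
    (hP_exch : ∀ (σ : Equiv.Perm (Fin N)) (s : Fin N → S) (a : A),
      P (fun i => s (σ i), a) = (P (s, a)).map (fun t => fun i => t (σ i)))
    -- `Q*` is the (unique) bounded measurable fixed point of `T`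
    (Qstar : (Fin N → S) × A → ℝ) (hQ_bm : BddMeas Qstar)
    (hQ_fix : bellmanT P r γ Qstar = Qstar)
    (hQ_unique : ∀ Q' : (Fin N → S) × A → ℝ, BddMeas Q' →
      bellmanT P r γ Q' = Q' → Q' = Qstar) :
    -- `Q*` is permutation invariant
    (∀ (σ : Equiv.Perm (Fin N)) (s : Fin N → S) (a : A),
      Qstar (fun i => s (σ i), a) = Qstar (s, a)) ∧
    -- and the greedy-action sets coincide
    (∀ (σ : Equiv.Perm (Fin N)) (s : Fin N → S),
      {a : A | Qstar (s, a) = ⨆ a' : A, Qstar (s, a')} =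
        {a : A | Qstar (fun i => s (σ i), a) =
          ⨆ a' : A, Qstar (fun i => s (σ i), a')}) := by
  have key : ∀ (σ : Equiv.Perm (Fin N)) (s : Fin N → S) (a : A),
      Qstar (fun i => s (σ i), a) = Qstar (s, a) := by
    intro σ s a
    set Q' : (Fin N → S) × A → ℝ := fun p => Qstar (fun i => p.1 (σ i), p.2) with hQ'
    have hg : Measurable (fun t : Fin N → S => (fun i => t (σ i) : Fin N → S)) :=
      measurable_pi_lambda _ (fun i => measurable_pi_apply (σ i))
    have hperm : Measurable (fun p : (Fin N → S) × A =>
        ((fun i => p.1 (σ i), p.2) : (Fin N → S) × A)) :=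
      (hg.comp measurable_fst).prodMk measurable_snd
    have hQ'_bm : BddMeas Q' := by
      obtain ⟨hm, M, hM⟩ := hQ_bm
      exact ⟨hm.comp hperm, M, fun p => hM _⟩
    have hsupmeas : Measurable (fun x : Fin N → S => ⨆ a' : A, Qstar (x, a')) :=
      Measurable.iSup (fun a' => hQ_bm.1.comp (measurable_id.prodMk measurable_const))
    have hfix' : bellmanT P r γ Q' = Q' := by
      funext p
      obtain ⟨t, b⟩ := p
      have h1 : (∫ x', (⨆ a' : A, Q' (x', a')) ∂(P (t, b)))
          = ∫ x', (⨆ a' : A, Qstar (x', a')) ∂(P (fun i => t (σ i), b)) := by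
        rw [hP_exch σ t b,
          integral_map hg.aemeasurable hsupmeas.aestronglyMeasurable]
      have h2 : bellmanT P r γ Q' (t, b) = bellmanT P r γ Qstar (fun i => t (σ i), b) := by
        simp only [bellmanT, hr_exch σ t b, h1]
      rw [h2, hQ_fix]
    have := hQ_unique Q' hQ'_bm hfix'
    exact congrFun this (s, a)
  refine ⟨key, fun σ s => ?_⟩
  simp only [key]
end

section
/- Let s, s' : Fin N → S. If the empirical measures of s and s' coincide, i.e. ∑_{i=1}^N δ_{s_i} = ∑_{i=1}^N δ_{s'_i} as measures on S, then there exists a permutation σ of Fin N such that s'_i = s_{σ(i)} for all i ∈ Fin N. -/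
open MeasureTheory

/-!
Evaluating both empirical measures at a singleton `{x}` shows that `s` and `s'` take the value `x`
equally often. Equal fibre cardinalities give bijections between corresponding fibres, and these
glue to the required permutation.
-/

lemma MeasureTheory.Measure.finset_sum_dirac_apply_singleton {S ι : Type*} [MeasurableSpace S]
    [MeasurableSingletonClass S] [Fintype ι] (f : ι → S) (x : S) :
    (∑ i, Measure.dirac (f i)) {x} = Nat.card {i // f i = x} := by
  classical
  simp [Measure.coe_finsetSum, Measure.dirac_apply' _ (measurableSet_singleton x), Set.indicator,
    Finset.sum_boole, Fintype.card_subtype]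

theorem Equiv.exists_comp_eq_of_card_fiber_eq {ι κ S : Type*} [Finite ι] [Finite κ]
    {f : ι → S} {g : κ → S} (hfg : ∀ x, Nat.card {i // f i = x} = Nat.card {j // g j = x}) :
    ∃ e : ι ≃ κ, ∀ i, g (e i) = f i :=
  ⟨Equiv.ofFiberEquiv fun x => (Finite.card_eq.1 (hfg x)).some, Equiv.ofFiberEquiv_map _⟩

theorem statement2_general
    {S : Type*} [MeasurableSpace S] [MeasurableSingletonClass S]
    {N : ℕ} (s s' : Fin N → S)
    (h : (∑ i : Fin N, Measure.dirac (s i)) = ∑ i : Fin N, Measure.dirac (s' i)) :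
    ∃ σ : Equiv.Perm (Fin N), ∀ i : Fin N, s' i = s (σ i) := by
  have hcard (x : S) : Nat.card {i // s' i = x} = Nat.card {i // s i = x} := by
    have hx := congrArg (· {x}) h
    simp only [Measure.finset_sum_dirac_apply_singleton] at hx
    exact_mod_cast hx.symm
  obtain ⟨σ, hσ⟩ := Equiv.exists_comp_eq_of_card_fiber_eq hcard
  exact ⟨σ, fun i => (hσ i).symm⟩

/-- if the empirical measures `∑_{i} δ_{s_i}` and `∑_{i} δ_{s'_i}` of two
vectors `s, s' : Fin N → S` coincide as measures on `S`, then `s'` is a permutation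
of `s`. -/
theorem statement2
    {S : Type*} [MeasurableSpace S] [MeasurableSingletonClass S]
    {N : ℕ} (hN : 1 ≤ N) (s s' : Fin N → S)
    (h : (∑ i : Fin N, Measure.dirac (s i)) = ∑ i : Fin N, Measure.dirac (s' i)) :
    ∃ σ : Equiv.Perm (Fin N), ∀ i : Fin N, s' i = s (σ i) :=
  statement2_general s s' h
end

section
/- Suppose Q : (Fin N → S) × A → ℝ is permutation invariant, i.e. Q(σ·s, a) = Q(s, a) for every permutation σ of Fin N, every s : Fin N → S and every a ∈ A, where (σ·s)_i = s_{σ(i)}. Then there exists a function g defined on pairs (measure on S, element of A) such that Q(s, a) = g(M_s, a) for all s and a, where M_s = (1/N)·∑_{i=1}^N δ_{s_i} is the empirical measure of s. -/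
open MeasureTheory

lemma emp_count {S : Type*} [MeasurableSpace S] [MeasurableSingletonClass S]
    {N : ℕ} (s : Fin N → S) (x : S) :
    (∑ i : Fin N, Measure.dirac (s i)) {x}
      = (Nat.card {i : Fin N // s i = x} : ENNReal) := by
  classical
  rw [Measure.finset_sum_apply, Nat.card_eq_fintype_card, Fintype.card_subtype,
    Finset.card_filter]
  push_cast
  refine Finset.sum_congr rfl fun i _ => ?_
  rw [Measure.dirac_apply]
  by_cases h : s i = x <;> simp [h, Set.indicator]

/-- a permutation-invariant function `Q : S^N × A → ℝ` factors through the
empirical measure, i.e. `Q(s,a) = g(M_s, a)` where `M_s = (1/N)·∑_i δ_{s_i}`. -/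
theorem statement3
    {S : Type*} [MeasurableSpace S] [MeasurableSingletonClass S]
    {A : Type*} [Nonempty A]
    {N : ℕ} (hN : 1 ≤ N)
    (Q : (Fin N → S) × A → ℝ)
    (hQ_inv : ∀ (σ : Equiv.Perm (Fin N)) (s : Fin N → S) (a : A),
      Q (fun i => s (σ i), a) = Q (s, a)) :
    ∃ g : Measure S × A → ℝ, ∀ (s : Fin N → S) (a : A),
      Q (s, a) = g (((N : ENNReal)⁻¹ • ∑ i : Fin N, Measure.dirac (s i)), a) := by
  classical
  set M : (Fin N → S) → Measure S :=
    fun s => (N : ENNReal)⁻¹ • ∑ i : Fin N, Measure.dirac (s i) with hM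
  have key : ∀ (s t : Fin N → S) (a : A), M s = M t → Q (s, a) = Q (t, a) := by
    intro s t a hst
    have hNne : (N : ENNReal) ≠ 0 := by exact_mod_cast Nat.one_le_iff_ne_zero.mp hN
    have hcount : ∀ x : S,
        Nat.card {i : Fin N // s i = x} = Nat.card {i : Fin N // t i = x} := by
      intro x
      have h1 : M s {x} = M t {x} := by rw [hst]
      simp only [hM, Measure.smul_apply, smul_eq_mul, emp_count] at h1
      have h2 := congrArg (fun z => (N : ENNReal) * z) h1
      simp only [← mul_assoc, ENNReal.mul_inv_cancel hNne (ENNReal.natCast_ne_top N),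
        one_mul] at h2
      exact_mod_cast h2
    have hfib : ∀ x : S, { i // s i = x } ≃ { i // t i = x } := by
      intro x
      apply Fintype.equivOfCardEq
      have := hcount x
      simpa [Nat.card_eq_fintype_card] using this
    let σ : Equiv.Perm (Fin N) := Equiv.ofFiberEquiv hfib
    have hσ : ∀ i, t (σ i) = s i := fun i => Equiv.ofFiberEquiv_map hfib i
    have h := hQ_inv σ t a
    have hs : (fun i => t (σ i)) = s := funext hσ
    rw [hs] at h
    exact h.symm ▸ rfl
  obtain ⟨a0⟩ := ‹Nonempty A›
  refine ⟨fun p => if h : ∃ s : Fin N → S, M s = p.1 then Q (h.choose, p.2) else 0,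
    fun s a => ?_⟩
  have h : ∃ u : Fin N → S, M u = M s := ⟨s, rfl⟩
  simp only [← hM]
  rw [dif_pos h]
  exact key s h.choose a h.choose_spec.symm
end

section
/- If ‖v_i‖²_H ≤ ς and ‖w_i‖²_H ≤ ς for all i = 1, …, n, then the operator norm of the difference of the sample covariance operators satisfies ‖C_v − C_w‖²_op ≤ (4ς/n)·∑_{i=1}^n ‖v_i − w_i‖²_H. -/
open scoped RealInnerProductSpace

/-- The sample covariance operator `C_u f = (1/n)·∑_i ⟨f, u_i⟩ u_i`. -/
noncomputable def sampleCov {H : Type*} [NormedAddCommGroup H] [InnerProductSpace ℝ H]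
    {n : ℕ} (u : Fin n → H) : H →L[ℝ] H :=
  (1 / (n : ℝ)) • ∑ i : Fin n, (innerSL ℝ (u i)).smulRight (u i)

lemma rank1_diff_norm_le {H : Type*} [NormedAddCommGroup H] [InnerProductSpace ℝ H]
    (v w : H) :
    ‖(innerSL ℝ v).smulRight v - (innerSL ℝ w).smulRight w‖ ≤ (‖v‖ + ‖w‖) * ‖v - w‖ := by
  apply ContinuousLinearMap.opNorm_le_bound _ (by positivity)
  intro f
  have key : ⟪v, f⟫ • v - ⟪w, f⟫ • w = ⟪v - w, f⟫ • v + ⟪w, f⟫ • (v - w) := by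
    rw [inner_sub_left, smul_sub, sub_smul]
    abel
  simp only [ContinuousLinearMap.sub_apply, ContinuousLinearMap.smulRight_apply,
    innerSL_apply_apply, key]
  calc ‖⟪v - w, f⟫ • v + ⟪w, f⟫ • (v - w)‖
      ≤ ‖⟪v - w, f⟫ • v‖ + ‖⟪w, f⟫ • (v - w)‖ := norm_add_le _ _
    _ ≤ ‖v - w‖ * ‖f‖ * ‖v‖ + ‖w‖ * ‖f‖ * ‖v - w‖ := by
        gcongr
        · rw [norm_smul]
          exact mul_le_mul_of_nonneg_right (by
            rw [Real.norm_eq_abs]; exact abs_real_inner_le_norm (v - w) f) (norm_nonneg _)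
        · rw [norm_smul]
          exact mul_le_mul_of_nonneg_right (by
            rw [Real.norm_eq_abs]; simpa [mul_comm] using abs_real_inner_le_norm w f) (norm_nonneg _)
    _ = (‖v‖ + ‖w‖) * ‖v - w‖ * ‖f‖ := by ring

/-- if `‖v_i‖² ≤ ς` and `‖w_i‖² ≤ ς` for all `i`, then the operator norm of
the difference of the sample covariance operators satisfies
`‖C_v − C_w‖²_op ≤ (4ς/n)·∑_i ‖v_i − w_i‖²`. -/
theorem statement6
    {H : Type*} [NormedAddCommGroup H] [InnerProductSpace ℝ H]
    {n : ℕ} (hn : 1 ≤ n) (v w : Fin n → H)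
    (ς : ℝ) (hς : 0 < ς)
    (hv : ∀ i : Fin n, ‖v i‖ ^ 2 ≤ ς) (hw : ∀ i : Fin n, ‖w i‖ ^ 2 ≤ ς) :
    ‖sampleCov v - sampleCov w‖ ^ 2 ≤
      (4 * ς / (n : ℝ)) * ∑ i : Fin n, ‖v i - w i‖ ^ 2 := by
  have hn0 : (0 : ℝ) < n := by exact_mod_cast hn
  have hsqrt : (0 : ℝ) < Real.sqrt ς := Real.sqrt_pos.mpr hς
  have hvb : ∀ i, ‖v i‖ ≤ Real.sqrt ς := fun i => by
    rw [← Real.sqrt_sq (norm_nonneg (v i))]; exact Real.sqrt_le_sqrt (by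
      simpa [sq] using hv i)
  have hwb : ∀ i, ‖w i‖ ≤ Real.sqrt ς := fun i => by
    rw [← Real.sqrt_sq (norm_nonneg (w i))]; exact Real.sqrt_le_sqrt (by
      simpa [sq] using hw i)
  -- operator norm bound
  have hop : ‖sampleCov v - sampleCov w‖ ≤
      (1 / (n : ℝ)) * (2 * Real.sqrt ς) * ∑ i : Fin n, ‖v i - w i‖ := by
    unfold sampleCov
    rw [← smul_sub, ← Finset.sum_sub_distrib]
    rw [norm_smul]
    have h1 : ‖(1 / (n : ℝ))‖ = 1 / (n : ℝ) := by
      rw [Real.norm_eq_abs, abs_of_pos (by positivity)]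
    rw [h1, mul_assoc]
    apply mul_le_mul_of_nonneg_left _ (by positivity)
    calc ‖∑ i : Fin n, ((innerSL ℝ (v i)).smulRight (v i) - (innerSL ℝ (w i)).smulRight (w i))‖
        ≤ ∑ i : Fin n, ‖(innerSL ℝ (v i)).smulRight (v i) - (innerSL ℝ (w i)).smulRight (w i)‖ :=
          norm_sum_le _ _
      _ ≤ ∑ i : Fin n, (2 * Real.sqrt ς) * ‖v i - w i‖ := by
          apply Finset.sum_le_sum
          intro i _
          calc ‖(innerSL ℝ (v i)).smulRight (v i) - (innerSL ℝ (w i)).smulRight (w i)‖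
              ≤ (‖v i‖ + ‖w i‖) * ‖v i - w i‖ := rank1_diff_norm_le _ _
            _ ≤ (2 * Real.sqrt ς) * ‖v i - w i‖ := by
                gcongr
                calc ‖v i‖ + ‖w i‖ ≤ Real.sqrt ς + Real.sqrt ς := add_le_add (hvb i) (hwb i)
                  _ = 2 * Real.sqrt ς := by ring
      _ = (2 * Real.sqrt ς) * ∑ i : Fin n, ‖v i - w i‖ := by rw [← Finset.mul_sum]
  have hS : (∑ i : Fin n, ‖v i - w i‖) ^ 2 ≤ n * ∑ i : Fin n, ‖v i - w i‖ ^ 2 := by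
    simpa using sq_sum_le_card_mul_sum_sq (s := Finset.univ) (f := fun i => ‖v i - w i‖)
  have hsq : ‖sampleCov v - sampleCov w‖ ^ 2 ≤
      ((1 / (n : ℝ)) * (2 * Real.sqrt ς) * ∑ i : Fin n, ‖v i - w i‖) ^ 2 := by
    apply pow_le_pow_left₀ (norm_nonneg _) hop
  refine hsq.trans ?_
  have hςs : Real.sqrt ς ^ 2 = ς := Real.sq_sqrt hς.le
  have expand : ((1 / (n : ℝ)) * (2 * Real.sqrt ς) * ∑ i : Fin n, ‖v i - w i‖) ^ 2
      = (4 * ς / (n : ℝ)^2) * (∑ i : Fin n, ‖v i - w i‖) ^ 2 := by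
    rw [mul_pow, mul_pow, mul_pow, hςs]; ring
  rw [expand]
  calc (4 * ς / (n : ℝ)^2) * (∑ i : Fin n, ‖v i - w i‖) ^ 2
      ≤ (4 * ς / (n : ℝ)^2) * (n * ∑ i : Fin n, ‖v i - w i‖ ^ 2) := by
        apply mul_le_mul_of_nonneg_left hS (by positivity)
    _ = (4 * ς / (n : ℝ)) * ∑ i : Fin n, ‖v i - w i‖ ^ 2 := by
        field_simp
end

section
/- Let C be a positive self-adjoint bounded linear operator on a real Hilbert space H and let λ > 0. Then C + λI is a continuous linear bijection of H and the operator norm satisfies ‖C^{1/2} ∘ (C + λI)^{-1}‖_op ≤ 1/(2√λ), where C^{1/2} denotes the positive square root of C. -/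
/-!
Write `u = C v + λ v` with `C = S²`. Expanding, `‖u‖² = ‖C v‖² + 2λ ⟪C v, v⟫ + λ² ‖v‖²`, and
`⟪C v, v⟫ = ‖S v‖² ≤ ‖C v‖ ‖v‖` since `S` is symmetric. AM-GM on `‖C v‖² + λ² ‖v‖²` then gives
`‖u‖² ≥ 4λ ‖S v‖²`, i.e. `‖S v‖ ≤ ‖u‖ / (2√λ)`. Invertibility of `C + λI` is Lax–Milgram for the
coercive form `⟪(C + λI) u, v⟫`.
-/

open RealInnerProductSpace

namespace ContinuousLinearMap

variable {H : Type*} [NormedAddCommGroup H] [InnerProductSpace ℝ H]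

theorem IsPositive.isCoercive_innerSL_comp_add_smul_id {C : H →L[ℝ] H} (hC : C.IsPositive)
    {lam : ℝ} (hlam : 0 < lam) :
    IsCoercive ((innerSL ℝ).comp (C + lam • ContinuousLinearMap.id ℝ H)) := by
  refine ⟨lam, hlam, fun u => ?_⟩
  have hCu : 0 ≤ ⟪C u, u⟫ := hC.inner_nonneg_left u
  have hB : (innerSL ℝ).comp (C + lam • ContinuousLinearMap.id ℝ H) u u
      = ⟪C u, u⟫ + lam * (‖u‖ * ‖u‖) := by
    simp only [comp_apply, innerSL_apply_apply, add_apply, smul_apply, id_apply, inner_add_left,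
      real_inner_smul_left, real_inner_self_eq_norm_mul_norm]
  linarith

theorem IsPositive.exists_continuousLinearEquiv_add_smul [CompleteSpace H] {C : H →L[ℝ] H}
    (hC : C.IsPositive) {lam : ℝ} (hlam : 0 < lam) :
    ∃ e : H ≃L[ℝ] H, ∀ x : H, e x = C x + lam • x :=
  let coercive := hC.isCoercive_innerSL_comp_add_smul_id hlam
  ⟨coercive.continuousLinearEquivOfBilin, fun _ =>
    (coercive.unique_continuousLinearEquivOfBilin fun _ => rfl).symm⟩

theorem four_mul_norm_sq_le_norm_apply_apply_add_smul_sq {S : H →L[ℝ] H}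
    (hS : S.IsSymmetric) (lam : ℝ) (v : H) :
    4 * lam * ‖S v‖ ^ 2 ≤ ‖S (S v) + lam • v‖ ^ 2 := by
  have hSv : ‖S v‖ ^ 2 = ⟪S (S v), v⟫ := by
    rw [← real_inner_self_eq_norm_sq]
    exact (hS (S v) v).symm
  have hCv : ⟪S (S v), v⟫ ≤ ‖S (S v)‖ * ‖v‖ := real_inner_le_norm _ _
  have hu : ‖S (S v) + lam • v‖ ^ 2
      = ‖S (S v)‖ ^ 2 + 2 * lam * ⟪S (S v), v⟫ + lam ^ 2 * ‖v‖ ^ 2 := by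
    rw [norm_add_sq_real, real_inner_smul_right, norm_smul, Real.norm_eq_abs, mul_pow, sq_abs]
    ring
  have hcross : lam * ‖S v‖ ^ 2 ≤ |lam| * (‖S (S v)‖ * ‖v‖) :=
    (mul_le_mul_of_nonneg_right (le_abs_self lam) (sq_nonneg _)).trans
      (mul_le_mul_of_nonneg_left (hSv ▸ hCv) (abs_nonneg lam))
  have amgm : 2 * (|lam| * (‖S (S v)‖ * ‖v‖)) ≤ ‖S (S v)‖ ^ 2 + lam ^ 2 * ‖v‖ ^ 2 := by
    nlinarith [sq_nonneg (‖S (S v)‖ - |lam| * ‖v‖), sq_abs lam]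
  rw [hu, ← hSv]
  linarith

theorem norm_comp_symm_le_of_apply_eq_apply_apply_add_smul {S : H →L[ℝ] H} (hS : S.IsSymmetric)
    {lam : ℝ} (hlam : 0 < lam) (e : H ≃L[ℝ] H) (he : ∀ x : H, e x = S (S x) + lam • x) :
    ‖S ∘L (e.symm : H →L[ℝ] H)‖ ≤ 1 / (2 * Real.sqrt lam) := by
  have hsqrt : 0 < 2 * Real.sqrt lam := by positivity
  refine opNorm_le_bound _ (by positivity) fun u => ?_
  obtain ⟨v, rfl⟩ := e.surjective u
  have hbound : (2 * Real.sqrt lam * ‖S v‖) ^ 2 ≤ ‖e v‖ ^ 2 := by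
    rw [mul_pow, mul_pow, Real.sq_sqrt hlam.le, he]
    linarith [four_mul_norm_sq_le_norm_apply_apply_add_smul_sq hS lam v]
  have hle : 2 * Real.sqrt lam * ‖S v‖ ≤ ‖e v‖ :=
    le_of_pow_le_pow_left₀ two_ne_zero (norm_nonneg _) hbound
  rw [coe_comp, Function.comp_apply, ContinuousLinearEquiv.coe_coe,
    ContinuousLinearEquiv.symm_apply_apply, one_div_mul_eq_div, le_div_iff₀ hsqrt]
  linarith

end ContinuousLinearMap

/-- for a positive self-adjoint bounded operator `C` on a real Hilbert
space and `λ > 0`, the operator `C + λI` is a continuous linear bijection of `H` and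
`‖C^{1/2} ∘ (C + λI)⁻¹‖_op ≤ 1/(2√λ)`, where `C^{1/2}` is the (unique) positive
self-adjoint square root of `C`. -/
theorem statement7
    {H : Type*} [NormedAddCommGroup H] [InnerProductSpace ℝ H] [CompleteSpace H]
    (C : H →L[ℝ] H) (hC : C.IsPositive)
    -- `S` is the positive self-adjoint square root of `C`
    (S : H →L[ℝ] H) (hS : S.IsPositive) (hSsq : S ∘L S = C)
    (lam : ℝ) (hlam : 0 < lam) :
    ∃ e : H ≃L[ℝ] H,
      (∀ x : H, e x = C x + lam • x) ∧
      ‖S ∘L (e.symm : H →L[ℝ] H)‖ ≤ 1 / (2 * Real.sqrt lam) := by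
  obtain ⟨e, he⟩ := hC.exists_continuousLinearEquiv_add_smul hlam
  refine ⟨e, he, ?_⟩
  exact ContinuousLinearMap.norm_comp_symm_le_of_apply_eq_apply_apply_add_smul hS.isSymmetric
    hlam e fun x => by rw [he, ← hSsq, ContinuousLinearMap.comp_apply]
end

section
/- Let C and C̃ be positive self-adjoint bounded linear operators on a real Hilbert space H and let λ > 0. If ‖(C − C̃) ∘ (C + λI)^{-1}‖_op ≤ 3/4, then C̃ + λI is a continuous linear bijection of H and ‖C^{1/2} ∘ (C̃ + λI)^{-1}‖_op ≤ 4·‖C^{1/2} ∘ (C + λI)^{-1}‖_op ≤ 2/√λ, where C^{1/2} denotes the positive square root of C. -/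
/-!
Since `C̃ + λ = (1 - D) ∘ (C + λ)` with `D = (C - C̃) ∘ (C + λ)⁻¹` and `‖D‖ ≤ 3/4`, the Neumann
series inverts `C̃ + λ` and `‖(1 - D)⁻¹‖ ≤ (1 - ‖D‖)⁻¹ ≤ 4`, which gives the first inequality.
For the second, if `C y + λ y = x` then `‖C^{1/2} y‖² = ⟪y, C y⟫ = ⟪y, x⟫ - λ‖y‖² ≤ ‖y‖‖x‖ - λ‖y‖²`,
and maximising over `‖y‖` gives `‖C^{1/2} (C + λ)⁻¹‖ ≤ 1 / (2√λ)`.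
-/

open ContinuousLinearMap

theorem Units.norm_val_inv_oneSub_le {R : Type*} [NormedRing R] [HasSummableGeomSeries R]
    {t : R} (ht : ‖t‖ < 1) (h1 : ‖(1 : R)‖ ≤ 1) :
    ‖(↑(Units.oneSub t ht)⁻¹ : R)‖ ≤ (1 - ‖t‖)⁻¹ :=
  (tsum_geometric_le_of_norm_lt_one t ht).trans (by linarith)

namespace ContinuousLinearEquiv

variable {𝕜 E F : Type*} [NontriviallyNormedField 𝕜] [NormedAddCommGroup E] [NormedSpace 𝕜 E]
  [CompleteSpace E] [NormedAddCommGroup F] [NormedSpace 𝕜 F]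

noncomputable def subOfNormLtOne (e : E ≃L[𝕜] E) (K : E →L[𝕜] E)
    (hK : ‖K ∘L (e.symm : E →L[𝕜] E)‖ < 1) : E ≃L[𝕜] E :=
  e.trans (ofUnit (Units.oneSub _ hK))

variable (e : E ≃L[𝕜] E) (K : E →L[𝕜] E) (hK : ‖K ∘L (e.symm : E →L[𝕜] E)‖ < 1)

theorem subOfNormLtOne_apply (x : E) : e.subOfNormLtOne K hK x = e x - K x := by
  change e x - K (e.symm (e x)) = _
  rw [e.symm_apply_apply]

theorem norm_comp_subOfNormLtOne_symm_le (G : E →L[𝕜] F) :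
    ‖G ∘L ((e.subOfNormLtOne K hK).symm : E →L[𝕜] E)‖
      ≤ (1 - ‖K ∘L (e.symm : E →L[𝕜] E)‖)⁻¹ * ‖G ∘L (e.symm : E →L[𝕜] E)‖ := by
  have hcomp : G ∘L ((e.subOfNormLtOne K hK).symm : E →L[𝕜] E)
      = (G ∘L (e.symm : E →L[𝕜] E)) ∘L (↑(Units.oneSub _ hK)⁻¹ : E →L[𝕜] E) := rfl
  rw [hcomp, mul_comm]
  exact (opNorm_comp_le _ _).trans <| mul_le_mul_of_nonneg_left
    (Units.norm_val_inv_oneSub_le hK norm_id_le) (norm_nonneg _)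

end ContinuousLinearEquiv

section Resolvent

variable {E : Type*} [NormedAddCommGroup E] [InnerProductSpace ℝ E]

theorem four_mul_norm_apply_sq_le_norm_sq_add_smul_sq {S : E →L[ℝ] E} (hS : S.IsSymmetric)
    {lam : ℝ} (hlam : 0 ≤ lam) (y : E) :
    4 * lam * ‖S y‖ ^ 2 ≤ ‖S (S y) + lam • y‖ ^ 2 := by
  set x := S (S y) + lam • y
  have hSy : ‖S y‖ ^ 2 = inner ℝ y x - lam * ‖y‖ ^ 2 := by
    rw [← real_inner_self_eq_norm_sq, show inner ℝ (S y) (S y) = inner ℝ y (S (S y)) from hS y _,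
      inner_add_right, real_inner_smul_right,
      real_inner_self_eq_norm_sq]
    ring
  rw [hSy]
  nlinarith [real_inner_le_norm y x, sq_nonneg (‖x‖ - 2 * lam * ‖y‖)]

theorem norm_comp_symm_le_of_apply_eq_sq_add_smul {S : E →L[ℝ] E} (hS : S.IsSymmetric)
    {lam : ℝ} (hlam : 0 < lam) (e : E ≃L[ℝ] E) (he : ∀ x, e x = S (S x) + lam • x) :
    ‖S ∘L (e.symm : E →L[ℝ] E)‖ ≤ (2 * Real.sqrt lam)⁻¹ := by
  refine opNorm_le_bound _ (by positivity) fun x => ?_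
  have hx : ‖x‖ = ‖S (S (e.symm x)) + lam • e.symm x‖ := by rw [← he, e.apply_symm_apply]
  have hsq : (2 * Real.sqrt lam * ‖S (e.symm x)‖) ^ 2 ≤ ‖x‖ ^ 2 := by
    rw [mul_pow, mul_pow, Real.sq_sqrt hlam.le, hx]
    linarith [four_mul_norm_apply_sq_le_norm_sq_add_smul_sq hS hlam.le (e.symm x)]
  rw [inv_mul_eq_div, le_div_iff₀' (by positivity)]
  exact (sq_le_sq₀ (by positivity) (norm_nonneg _)).mp hsq

end Resolvent

theorem statement8_general
    {H : Type*} [NormedAddCommGroup H] [InnerProductSpace ℝ H] [CompleteSpace H]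
    (C Ctilde : H →L[ℝ] H)
    -- `S` is the positive self-adjoint square root of `C`
    (S : H →L[ℝ] H) (hS : S.IsPositive) (hSsq : S ∘L S = C)
    (lam : ℝ) (hlam : 0 < lam)
    -- `e` realizes the continuous linear bijection `C + λI`
    (e : H ≃L[ℝ] H) (he : ∀ x : H, e x = C x + lam • x)
    (hsmall : ‖(C - Ctilde) ∘L (e.symm : H →L[ℝ] H)‖ ≤ 3 / 4) :
    ∃ et : H ≃L[ℝ] H,
      (∀ x : H, et x = Ctilde x + lam • x) ∧
      ‖S ∘L (et.symm : H →L[ℝ] H)‖ ≤ 4 * ‖S ∘L (e.symm : H →L[ℝ] H)‖ ∧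
      4 * ‖S ∘L (e.symm : H →L[ℝ] H)‖ ≤ 2 / Real.sqrt lam := by
  have hsmall' : ‖(C - Ctilde) ∘L (e.symm : H →L[ℝ] H)‖ < 1 := hsmall.trans_lt (by norm_num)
  have hinv : (1 - ‖(C - Ctilde) ∘L (e.symm : H →L[ℝ] H)‖)⁻¹ ≤ 4 := by
    rw [inv_le_comm₀ (by linarith) (by norm_num)]
    linarith
  have hres : ‖S ∘L (e.symm : H →L[ℝ] H)‖ ≤ (2 * Real.sqrt lam)⁻¹ :=
    norm_comp_symm_le_of_apply_eq_sq_add_smul hS.isSymmetric hlam e fun x => by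
      rw [he, ← hSsq, comp_apply]
  refine ⟨e.subOfNormLtOne (C - Ctilde) hsmall', fun x => ?_, ?_, ?_⟩
  · rw [e.subOfNormLtOne_apply, he, sub_apply]
    abel
  · exact (e.norm_comp_subOfNormLtOne_symm_le _ hsmall' S).trans <|
      mul_le_mul_of_nonneg_right hinv (norm_nonneg _)
  · have hsqrt : 0 < Real.sqrt lam := Real.sqrt_pos.mpr hlam
    calc 4 * ‖S ∘L (e.symm : H →L[ℝ] H)‖ ≤ 4 * (2 * Real.sqrt lam)⁻¹ := by gcongr
      _ = 2 / Real.sqrt lam := by field_simp; norm_num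

/-- let `C`, `C̃` be positive self-adjoint bounded operators on a real
Hilbert space and `λ > 0`. If `‖(C − C̃) ∘ (C + λI)⁻¹‖_op ≤ 3/4`, then `C̃ + λI` is a
continuous linear bijection of `H` and
`‖C^{1/2} ∘ (C̃ + λI)⁻¹‖_op ≤ 4·‖C^{1/2} ∘ (C + λI)⁻¹‖_op ≤ 2/√λ`,
where `C^{1/2}` is the (unique) positive self-adjoint square root of `C`. -/
theorem statement8
    {H : Type*} [NormedAddCommGroup H] [InnerProductSpace ℝ H] [CompleteSpace H]
    (C Ctilde : H →L[ℝ] H) (hC : C.IsPositive) (hCt : Ctilde.IsPositive)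
    -- `S` is the positive self-adjoint square root of `C`
    (S : H →L[ℝ] H) (hS : S.IsPositive) (hSsq : S ∘L S = C)
    (lam : ℝ) (hlam : 0 < lam)
    -- `e` realizes the continuous linear bijection `C + λI`
    (e : H ≃L[ℝ] H) (he : ∀ x : H, e x = C x + lam • x)
    (hsmall : ‖(C - Ctilde) ∘L (e.symm : H →L[ℝ] H)‖ ≤ 3 / 4) :
    ∃ et : H ≃L[ℝ] H,
      (∀ x : H, et x = Ctilde x + lam • x) ∧
      ‖S ∘L (et.symm : H →L[ℝ] H)‖ ≤ 4 * ‖S ∘L (e.symm : H →L[ℝ] H)‖ ∧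
      4 * ‖S ∘L (e.symm : H →L[ℝ] H)‖ ≤ 2 / Real.sqrt lam :=
  statement8_general C Ctilde S hS hSsq lam hlam e he hsmall
end

section
/- Let Q* be the unique bounded measurable fixed point of T, let π* : X → A be a measurable greedy policy with respect to Q*, let Q̂_k and Q̂_{k+1} be bounded measurable functions on X × A, set ε_{k+1} = T Q̂_k − Q̂_{k+1}, and let π_k : X → A be a measurable greedy policy with respect to Q̂_k. Then pointwise on X × A: γ·E^{π_k}(Q* − Q̂_k)(x,a) + ε_{k+1}(x,a) ≤ Q*(x,a) − Q̂_{k+1}(x,a) ≤ γ·E^{π*}(Q* − Q̂_k)(x,a) + ε_{k+1}(x,a). -/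
open MeasureTheory ProbabilityTheory

/-- The expectation operator `E^π` of a deterministic policy `π : X → A`
(identified with the kernel of point masses):
`E^π Q (x,a) = ∫ Q(x', π(x')) P(dx'|x,a)`. -/
noncomputable def evalDetPol {X A : Type*} [MeasurableSpace X] [MeasurableSpace A]
    (P : Kernel (X × A) X) (π : X → A) (Q : X × A → ℝ) : X × A → ℝ :=
  fun p => ∫ x', Q (x', π x') ∂(P p)

/-!
Since `Q* = T Q*`, we have `Q* − Q̂_{k+1} = (T Q* − T Q̂_k) + ε_{k+1}`, so it suffices to sandwich
`T Q₁ − T Q₂` for bounded measurable `Q₁, Q₂` with measurable greedy policies `π₁, π₂`. Greediness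
turns the maxima inside `T` into evaluations along the policies, so
`T Q₁ − T Q₂ = γ ∫ (Q₁(x', π₁ x') − Q₂(x', π₂ x')) P(dx'|·)`, and the integrand lies between
`(Q₁ − Q₂)(x', π₂ x')` and `(Q₁ − Q₂)(x', π₁ x')` because each policy is greedy for its own function.
-/

def IsGreedy {X A : Type*} (Q : X × A → ℝ) (π : X → A) : Prop :=
  ∀ x, Q (x, π x) = ⨆ a, Q (x, a)

theorem IsGreedy.le_apply {X A : Type*} [Finite A] {Q : X × A → ℝ} {π : X → A}
    (h : IsGreedy Q π) (x : X) (a : A) : Q (x, a) ≤ Q (x, π x) :=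
  h x ▸ le_ciSup (f := fun a => Q (x, a)) (Finite.bddAbove_range _) a

section

variable {X A : Type*} [MeasurableSpace X] [MeasurableSpace A]

theorem BddMeas.integrable_comp {Q : X × A → ℝ} (hQ : BddMeas Q) {π : X → A} (hπ : Measurable π)
    (μ : Measure X) [IsFiniteMeasure μ] : Integrable (fun x => Q (x, π x)) μ := by
  obtain ⟨hm, M, hM⟩ := hQ
  exact (integrable_const M).mono' (hm.comp (measurable_id.prodMk hπ)).aestronglyMeasurable
    (ae_of_all _ fun x => hM (x, π x))

variable {P : Kernel (X × A) X} [IsFiniteKernel P] {r : X × A → ℝ} {γ : ℝ}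
  {Q₁ Q₂ : X × A → ℝ} {π₁ π₂ : X → A}

theorem bellmanT_sub_bellmanT_of_isGreedy (hQ₁ : BddMeas Q₁) (hQ₂ : BddMeas Q₂)
    (hπ₁ : Measurable π₁) (hπ₂ : Measurable π₂) (h₁ : IsGreedy Q₁ π₁) (h₂ : IsGreedy Q₂ π₂)
    (p : X × A) :
    bellmanT P r γ Q₁ p - bellmanT P r γ Q₂ p =
      γ * ∫ x, (Q₁ (x, π₁ x) - Q₂ (x, π₂ x)) ∂(P p) := by
  simp only [bellmanT, ← h₁ _, ← h₂ _]
  rw [integral_sub (hQ₁.integrable_comp hπ₁ _) (hQ₂.integrable_comp hπ₂ _)]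
  ring

variable [Finite A]

theorem mul_evalDetPol_le_bellmanT_sub (hγ : 0 ≤ γ) (hQ₁ : BddMeas Q₁) (hQ₂ : BddMeas Q₂)
    (hπ₁ : Measurable π₁) (hπ₂ : Measurable π₂) (h₁ : IsGreedy Q₁ π₁) (h₂ : IsGreedy Q₂ π₂)
    (p : X × A) :
    γ * evalDetPol P π₂ (fun q => Q₁ q - Q₂ q) p ≤ bellmanT P r γ Q₁ p - bellmanT P r γ Q₂ p := by
  rw [bellmanT_sub_bellmanT_of_isGreedy hQ₁ hQ₂ hπ₁ hπ₂ h₁ h₂]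
  refine mul_le_mul_of_nonneg_left (integral_mono ?_ ?_ fun x => ?_) hγ
  · exact (hQ₁.integrable_comp hπ₂ _).sub (hQ₂.integrable_comp hπ₂ _)
  · exact (hQ₁.integrable_comp hπ₁ _).sub (hQ₂.integrable_comp hπ₂ _)
  · linarith [h₁.le_apply x (π₂ x)]

theorem bellmanT_sub_le_mul_evalDetPol (hγ : 0 ≤ γ) (hQ₁ : BddMeas Q₁) (hQ₂ : BddMeas Q₂)
    (hπ₁ : Measurable π₁) (hπ₂ : Measurable π₂) (h₁ : IsGreedy Q₁ π₁) (h₂ : IsGreedy Q₂ π₂)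
    (p : X × A) :
    bellmanT P r γ Q₁ p - bellmanT P r γ Q₂ p ≤ γ * evalDetPol P π₁ (fun q => Q₁ q - Q₂ q) p := by
  rw [bellmanT_sub_bellmanT_of_isGreedy hQ₁ hQ₂ hπ₁ hπ₂ h₁ h₂]
  refine mul_le_mul_of_nonneg_left (integral_mono ?_ ?_ fun x => ?_) hγ
  · exact (hQ₁.integrable_comp hπ₁ _).sub (hQ₂.integrable_comp hπ₂ _)
  · exact (hQ₁.integrable_comp hπ₁ _).sub (hQ₂.integrable_comp hπ₁ _)
  · linarith [h₂.le_apply x (π₁ x)]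

end

theorem statement13_general
    {X A : Type*} [MeasurableSpace X]
    [Fintype A] [MeasurableSpace A]
    (P : Kernel (X × A) X) [IsMarkovKernel P]
    (r : X × A → ℝ)
    (γ : ℝ) (hγ0 : 0 < γ)
    -- `Q*` is the unique bounded measurable fixed point of `T`
    (Qstar : X × A → ℝ) (hQstar_bm : BddMeas Qstar)
    (hQstar_fix : bellmanT P r γ Qstar = Qstar)
    -- `π*` is a measurable greedy policy w.r.t. `Q*`
    (πstar : X → A) (hπstar_meas : Measurable πstar)
    (hπstar_greedy : ∀ x : X, Qstar (x, πstar x) = ⨆ a : A, Qstar (x, a))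
    -- `Q̂_k`, `Q̂_{k+1}` bounded measurable, `π_k` greedy w.r.t. `Q̂_k`
    (Qhatk Qhatk1 : X × A → ℝ) (hQhatk : BddMeas Qhatk)
    (πk : X → A) (hπk_meas : Measurable πk)
    (hπk_greedy : ∀ x : X, Qhatk (x, πk x) = ⨆ a : A, Qhatk (x, a)) :
    ∀ p : X × A,
      γ * evalDetPol P πk (fun q => Qstar q - Qhatk q) p +
          (bellmanT P r γ Qhatk p - Qhatk1 p) ≤
        Qstar p - Qhatk1 p ∧
      Qstar p - Qhatk1 p ≤
        γ * evalDetPol P πstar (fun q => Qstar q - Qhatk q) p +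
          (bellmanT P r γ Qhatk p - Qhatk1 p) := by
  intro p
  have hsplit : Qstar p - Qhatk1 p =
      (bellmanT P r γ Qstar p - bellmanT P r γ Qhatk p) + (bellmanT P r γ Qhatk p - Qhatk1 p) := by
    rw [hQstar_fix]; ring
  have hlower := mul_evalDetPol_le_bellmanT_sub (P := P) (r := r) hγ0.le hQstar_bm hQhatk
    hπstar_meas hπk_meas hπstar_greedy hπk_greedy p
  have hupper := bellmanT_sub_le_mul_evalDetPol (P := P) (r := r) hγ0.le hQstar_bm hQhatk
    hπstar_meas hπk_meas hπstar_greedy hπk_greedy p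
  constructor <;> linarith

/-- one-step error propagation sandwich. With `ε_{k+1} = T Q̂_k − Q̂_{k+1}`,
`π_k` greedy w.r.t. `Q̂_k` and `π*` greedy w.r.t. `Q*`, pointwise
`γ·E^{π_k}(Q* − Q̂_k) + ε_{k+1} ≤ Q* − Q̂_{k+1} ≤ γ·E^{π*}(Q* − Q̂_k) + ε_{k+1}`. -/
theorem statement13
    {X A : Type*} [MeasurableSpace X]
    [Fintype A] [Nonempty A] [MeasurableSpace A] [MeasurableSingletonClass A]
    (P : Kernel (X × A) X) [IsMarkovKernel P]
    (r : X × A → ℝ) (hr_meas : Measurable r)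
    (hr_bd : ∃ M : ℝ, ∀ p : X × A, |r p| ≤ M)
    (γ : ℝ) (hγ0 : 0 < γ) (hγ1 : γ < 1)
    -- `Q*` is the unique bounded measurable fixed point of `T`
    (Qstar : X × A → ℝ) (hQstar_bm : BddMeas Qstar)
    (hQstar_fix : bellmanT P r γ Qstar = Qstar)
    (hQstar_unique : ∀ Q' : X × A → ℝ, BddMeas Q' → bellmanT P r γ Q' = Q' → Q' = Qstar)
    -- `π*` is a measurable greedy policy w.r.t. `Q*`
    (πstar : X → A) (hπstar_meas : Measurable πstar)
    (hπstar_greedy : ∀ x : X, Qstar (x, πstar x) = ⨆ a : A, Qstar (x, a))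
    -- `Q̂_k`, `Q̂_{k+1}` bounded measurable, `π_k` greedy w.r.t. `Q̂_k`
    (Qhatk Qhatk1 : X × A → ℝ) (hQhatk : BddMeas Qhatk) (hQhatk1 : BddMeas Qhatk1)
    (πk : X → A) (hπk_meas : Measurable πk)
    (hπk_greedy : ∀ x : X, Qhatk (x, πk x) = ⨆ a : A, Qhatk (x, a)) :
    ∀ p : X × A,
      γ * evalDetPol P πk (fun q => Qstar q - Qhatk q) p +
          (bellmanT P r γ Qhatk p - Qhatk1 p) ≤
        Qstar p - Qhatk1 p ∧
      Qstar p - Qhatk1 p ≤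
        γ * evalDetPol P πstar (fun q => Qstar q - Qhatk q) p +
          (bellmanT P r γ Qhatk p - Qhatk1 p) :=
  statement13_general P r γ hγ0 Qstar hQstar_bm hQstar_fix πstar hπstar_meas hπstar_greedy Qhatk
    Qhatk1 hQhatk πk hπk_meas hπk_greedy
end

section
/- Let Q* be the unique bounded measurable fixed point of T, let π* be a measurable greedy policy with respect to Q*, let Q̂_κ be bounded measurable with |Q̂_κ| ≤ Q_max, let π_κ be a measurable greedy policy with respect to Q̂_κ, and let Q^{π_κ} be the unique bounded measurable fixed point of T^{π_κ}. Then for every (x,a) ∈ X × A, 0 ≤ Q*(x,a) − Q^{π_κ}(x,a) ≤ γ·∑_{ℓ=0}^∞ γ^ℓ·((E^{π_κ})^ℓ ((E^{π*} − E^{π_κ})(Q* − Q̂_κ)))(x,a), where (E^{π_κ})^ℓ is the ℓ-fold composition of E^{π_κ} and the series converges absolutely. -/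
open MeasureTheory ProbabilityTheory

/-- The Bellman evaluation operator of a deterministic policy `π : X → A`. -/
noncomputable def bellmanTdet {X A : Type*} [MeasurableSpace X] [MeasurableSpace A]
    (P : Kernel (X × A) X) (π : X → A) (r : X × A → ℝ) (γ : ℝ)
    (Q : X × A → ℝ) : X × A → ℝ :=
  fun p => r p + γ * ∫ x', Q (x', π x') ∂(P p)

/-!
Write `Δ = Q* − Q^{π_κ}` and `E = E^{π_κ}`. Greediness of `π*` turns `T Q* = Q*` into
`T^{π*} Q* = Q*`, and subtracting the two fixed-point equations gives `Δ = γ (h + E Δ)` with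
`h = (E^{π*} − E) Q*`. Unrolling this `n` times leaves the remainder `γⁿ Eⁿ Δ`, which vanishes
because `E` does not increase sup-bounds, so `Δ = ∑ γ^{ℓ+1} E^ℓ h`. Greediness of `π*` for `Q*`
gives `h ≥ 0`, greediness of `π_κ` for `Q̂_κ` gives `h ≤ (E^{π*} − E)(Q* − Q̂_κ)`, and `E` is
positive, so both bounds pass through the series termwise.
-/

section MDP

open Finset

variable {X A : Type*} [MeasurableSpace X] [MeasurableSpace A]

lemma BddMeas.sub {f g : X × A → ℝ} (hf : BddMeas f) (hg : BddMeas g) : BddMeas (f - g) := by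
  obtain ⟨hfm, M, hM⟩ := hf
  obtain ⟨hgm, N, hN⟩ := hg
  exact ⟨hfm.sub hgm, M + N, fun q => (abs_sub _ _).trans (add_le_add (hM q) (hN q))⟩

section evalDetPol

variable {P : Kernel (X × A) X} {π σ : X → A} {f g : X × A → ℝ}

lemma BddMeas.integrable_comp_policy [IsFiniteKernel P] (hπ : Measurable π) (hf : BddMeas f)
    (p : X × A) : Integrable (fun x' => f (x', π x')) (P p) := by
  obtain ⟨hfm, M, hM⟩ := hf
  exact (integrable_const M).mono' (hfm.comp (measurable_id.prodMk hπ)).aestronglyMeasurable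
    (ae_of_all _ fun x' => hM (x', π x'))

lemma abs_evalDetPol_le [IsMarkovKernel P] {M : ℝ} (hf : ∀ q, |f q| ≤ M) (p : X × A) :
    |evalDetPol P π f p| ≤ M := by
  simpa [evalDetPol] using
    norm_integral_le_of_norm_le_const (μ := P p) (f := fun x' => f (x', π x')) (C := M)
      (ae_of_all _ fun x' => hf (x', π x'))

lemma BddMeas.evalDetPol [IsMarkovKernel P] (hπ : Measurable π) (hf : BddMeas f) :
    BddMeas (_root_.evalDetPol P π f) := by
  obtain ⟨hfm, M, hM⟩ := hf
  refine ⟨?_, M, abs_evalDetPol_le hM⟩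
  exact (hfm.comp (measurable_snd.prodMk (hπ.comp measurable_snd))).stronglyMeasurable
    |>.integral_kernel_prod_right' |>.measurable

lemma evalDetPol_nonneg (hf : 0 ≤ f) : 0 ≤ evalDetPol P π f :=
  fun _ => integral_nonneg fun x' => hf (x', π x')

lemma evalDetPol_mono [IsFiniteKernel P] (hπ : Measurable π) (hf : BddMeas f) (hg : BddMeas g)
    (hfg : f ≤ g) : evalDetPol P π f ≤ evalDetPol P π g :=
  fun p => integral_mono (hf.integrable_comp_policy hπ p) (hg.integrable_comp_policy hπ p)
    fun x' => hfg (x', π x')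

lemma evalDetPol_add [IsFiniteKernel P] (hπ : Measurable π) (hf : BddMeas f) (hg : BddMeas g) :
    evalDetPol P π (f + g) = evalDetPol P π f + evalDetPol P π g :=
  funext fun p => integral_add (hf.integrable_comp_policy hπ p) (hg.integrable_comp_policy hπ p)

lemma evalDetPol_sub [IsFiniteKernel P] (hπ : Measurable π) (hf : BddMeas f) (hg : BddMeas g) :
    evalDetPol P π (f - g) = evalDetPol P π f - evalDetPol P π g :=
  funext fun p => integral_sub (hf.integrable_comp_policy hπ p) (hg.integrable_comp_policy hπ p)

lemma evalDetPol_smul (c : ℝ) : evalDetPol P π (c • f) = c • evalDetPol P π f :=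
  funext fun _ => integral_const_mul c _

lemma evalDetPol_le_of_greedy [Finite A] [IsFiniteKernel P] (hσ : Measurable σ)
    (hπ : Measurable π) (hf : BddMeas f) (hgreedy : ∀ x, f (x, π x) = ⨆ a, f (x, a)) :
    evalDetPol P σ f ≤ evalDetPol P π f :=
  fun p => integral_mono (hf.integrable_comp_policy hσ p) (hf.integrable_comp_policy hπ p)
    fun x' => hgreedy x' ▸ le_ciSup (Set.finite_range fun a => f (x', a)).bddAbove (σ x')

end evalDetPol

section iterate

variable {P : Kernel (X × A) X} {π : X → A} {f g : X × A → ℝ}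

local notation "E" => evalDetPol P π

lemma iterate_evalDetPol_nonneg (hf : 0 ≤ f) (n : ℕ) : 0 ≤ E^[n] f := by
  induction n with
  | zero => exact hf
  | succ n ih => rw [Function.iterate_succ_apply']; exact evalDetPol_nonneg ih

lemma iterate_evalDetPol_smul (c : ℝ) (n : ℕ) : E^[n] (c • f) = c • E^[n] f := by
  induction n with
  | zero => rfl
  | succ n ih => simp only [Function.iterate_succ_apply', ih, evalDetPol_smul]

variable [IsMarkovKernel P]

lemma BddMeas.iterate_evalDetPol (hπ : Measurable π) (hf : BddMeas f) (n : ℕ) :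
    BddMeas (E^[n] f) := by
  induction n with
  | zero => exact hf
  | succ n ih => rw [Function.iterate_succ_apply']; exact ih.evalDetPol hπ

lemma abs_iterate_evalDetPol_le {M : ℝ} (hf : ∀ q, |f q| ≤ M) (n : ℕ) (p : X × A) :
    |E^[n] f p| ≤ M := by
  induction n generalizing p with
  | zero => exact hf p
  | succ n ih => rw [Function.iterate_succ_apply']; exact abs_evalDetPol_le ih p

lemma iterate_evalDetPol_mono (hπ : Measurable π) (hf : BddMeas f) (hg : BddMeas g)
    (hfg : f ≤ g) (n : ℕ) : E^[n] f ≤ E^[n] g := by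
  induction n with
  | zero => exact hfg
  | succ n ih =>
    simp only [Function.iterate_succ_apply']
    exact evalDetPol_mono hπ (hf.iterate_evalDetPol hπ n) (hg.iterate_evalDetPol hπ n) ih

lemma iterate_evalDetPol_add (hπ : Measurable π) (hf : BddMeas f) (hg : BddMeas g) (n : ℕ) :
    E^[n] (f + g) = E^[n] f + E^[n] g := by
  induction n with
  | zero => rfl
  | succ n ih =>
    simp only [Function.iterate_succ_apply', ih]
    exact evalDetPol_add hπ (hf.iterate_evalDetPol hπ n) (hg.iterate_evalDetPol hπ n)

lemma summable_abs_pow_mul_iterate_evalDetPol {γ M : ℝ} (hγ0 : 0 ≤ γ) (hγ1 : γ < 1)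
    (hf : ∀ q, |f q| ≤ M) (p : X × A) : Summable fun ℓ : ℕ => |γ ^ ℓ * E^[ℓ] f p| := by
  refine .of_nonneg_of_le (fun _ => abs_nonneg _) (fun ℓ => ?_)
    ((summable_geometric_of_lt_one hγ0 hγ1).mul_left M)
  rw [abs_mul, abs_of_nonneg (pow_nonneg hγ0 ℓ), mul_comm]
  exact mul_le_mul_of_nonneg_right (abs_iterate_evalDetPol_le hf ℓ p) (pow_nonneg hγ0 ℓ)

end iterate

section neumann

variable {P : Kernel (X × A) X} [IsMarkovKernel P] {π : X → A} {γ : ℝ} {Δ h g : X × A → ℝ}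

local notation "E" => evalDetPol P π

lemma eq_sum_range_add_pow_mul_iterate (hπ : Measurable π) (hΔ : BddMeas Δ) (hh : BddMeas h)
    (hrec : Δ = γ • (h + E Δ)) (n : ℕ) (p : X × A) :
    Δ p = ∑ ℓ ∈ range n, γ * (γ ^ ℓ * E^[ℓ] h p) + γ ^ n * E^[n] Δ p := by
  induction n with
  | zero => simp
  | succ n ih =>
    have hstep : E^[n] Δ = γ • (E^[n] h + E^[n + 1] Δ) := by
      conv_lhs => rw [hrec]
      rw [iterate_evalDetPol_smul, iterate_evalDetPol_add hπ hh (hΔ.evalDetPol hπ),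
        ← Function.iterate_succ_apply]
    rw [ih, sum_range_succ, congrFun hstep p]
    simp only [Pi.smul_apply, Pi.add_apply, smul_eq_mul]
    ring

lemma hasSum_of_eq_smul_add_evalDetPol (hπ : Measurable π) (hγ0 : 0 ≤ γ) (hγ1 : γ < 1)
    (hΔ : BddMeas Δ) (hh : BddMeas h) (hrec : Δ = γ • (h + E Δ)) (p : X × A) :
    HasSum (fun ℓ : ℕ => γ * (γ ^ ℓ * E^[ℓ] h p)) (Δ p) := by
  have ⟨_, Mh, hMh⟩ := hh
  have ⟨_, MΔ, hMΔ⟩ := hΔ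
  have hsum := (summable_abs_pow_mul_iterate_evalDetPol (P := P) (π := π) hγ0 hγ1 hMh p).of_abs
    |>.mul_left γ
  refine hsum.hasSum_iff_tendsto_nat.mpr ?_
  have hrem : Filter.Tendsto (fun n : ℕ => γ ^ n * E^[n] Δ p) Filter.atTop (nhds 0) := by
    refine squeeze_zero_norm (fun n => ?_)
      ((tendsto_pow_atTop_nhds_zero_of_lt_one hγ0 hγ1).mul_const MΔ |>.trans (by simp))
    rw [norm_mul, norm_pow, Real.norm_of_nonneg hγ0]
    exact mul_le_mul_of_nonneg_left (abs_iterate_evalDetPol_le hMΔ n p) (pow_nonneg hγ0 n)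
  have hpartial (n : ℕ) : ∑ ℓ ∈ range n, γ * (γ ^ ℓ * E^[ℓ] h p) = Δ p - γ ^ n * E^[n] Δ p := by
    rw [eq_sum_range_add_pow_mul_iterate hπ hΔ hh hrec n p]
    ring
  simpa [hpartial] using hrem.const_sub (Δ p)

lemma bounds_of_eq_smul_add_evalDetPol (hπ : Measurable π) (hγ0 : 0 ≤ γ) (hγ1 : γ < 1)
    (hΔ : BddMeas Δ) (hh : BddMeas h) (hg : BddMeas g) (h_nonneg : 0 ≤ h) (hhg : h ≤ g)
    (hrec : Δ = γ • (h + E Δ)) (p : X × A) :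
    0 ≤ Δ p ∧ Δ p ≤ γ * ∑' ℓ : ℕ, γ ^ ℓ * E^[ℓ] g p ∧
      Summable fun ℓ : ℕ => |γ ^ ℓ * E^[ℓ] g p| := by
  have hΔsum := hasSum_of_eq_smul_add_evalDetPol hπ hγ0 hγ1 hΔ hh hrec p
  have ⟨_, Mg, hMg⟩ := hg
  have hgsum := summable_abs_pow_mul_iterate_evalDetPol (P := P) (π := π) hγ0 hγ1 hMg p
  refine ⟨hΔsum.nonneg fun ℓ => ?_, hasSum_le (fun ℓ => ?_) hΔsum (hgsum.of_abs.hasSum.mul_left γ),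
    hgsum⟩
  · exact mul_nonneg hγ0 (mul_nonneg (pow_nonneg hγ0 ℓ) (iterate_evalDetPol_nonneg h_nonneg ℓ p))
  · exact mul_le_mul_of_nonneg_left (mul_le_mul_of_nonneg_left
      (iterate_evalDetPol_mono hπ hh hg hhg ℓ p) (pow_nonneg hγ0 ℓ)) hγ0

end neumann

section bellman

variable {P : Kernel (X × A) X} {r : X × A → ℝ} {γ : ℝ} {π σ : X → A} {Q Q' : X × A → ℝ}

lemma bellmanT_eq_bellmanTdet_of_greedy (hgreedy : ∀ x, Q (x, π x) = ⨆ a, Q (x, a)) :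
    bellmanT P r γ Q = bellmanTdet P π r γ Q := by
  unfold bellmanT bellmanTdet
  simp only [hgreedy]

lemma sub_eq_smul_of_bellmanTdet_eq_self [IsFiniteKernel P] (hπ : Measurable π)
    (hQ : BddMeas Q) (hQ' : BddMeas Q') (hfix : bellmanTdet P σ r γ Q = Q)
    (hfix' : bellmanTdet P π r γ Q' = Q') :
    Q - Q' = γ • (evalDetPol P σ Q - evalDetPol P π Q + evalDetPol P π (Q - Q')) := by
  rw [evalDetPol_sub hπ hQ hQ']
  conv_lhs => rw [← hfix, ← hfix']
  ext p
  simp only [bellmanTdet, evalDetPol, Pi.sub_apply, Pi.add_apply, Pi.smul_apply, smul_eq_mul]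
  ring

end bellman

end MDP

theorem statement14_general
    {X A : Type*} [MeasurableSpace X]
    [Fintype A] [MeasurableSpace A]
    (P : Kernel (X × A) X) [IsMarkovKernel P]
    (r : X × A → ℝ)
    (Rmax : ℝ)
    (γ : ℝ) (hγ0 : 0 < γ) (hγ1 : γ < 1)
    -- `Q*` is the unique bounded measurable fixed point of `T`
    (Qstar : X × A → ℝ) (hQstar_bm : BddMeas Qstar)
    (hQstar_fix : bellmanT P r γ Qstar = Qstar)
    -- `π*` is a measurable greedy policy w.r.t. `Q*`
    (πstar : X → A) (hπstar_meas : Measurable πstar)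
    (hπstar_greedy : ∀ x : X, Qstar (x, πstar x) = ⨆ a : A, Qstar (x, a))
    -- `Q̂_κ` bounded measurable with `|Q̂_κ| ≤ Q_max`
    (Qhat : X × A → ℝ) (hQhat_meas : Measurable Qhat)
    (hQhat_bd : ∀ p : X × A, |Qhat p| ≤ Rmax / (1 - γ))
    -- `π_κ` is a measurable greedy policy w.r.t. `Q̂_κ`
    (πκ : X → A) (hπκ_meas : Measurable πκ)
    (hπκ_greedy : ∀ x : X, Qhat (x, πκ x) = ⨆ a : A, Qhat (x, a))
    -- `Q^{π_κ}` is the unique bounded measurable fixed point of `T^{π_κ}`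
    (Qpik : X × A → ℝ) (hQpik_bm : BddMeas Qpik)
    (hQpik_fix : bellmanTdet P πκ r γ Qpik = Qpik) :
    ∀ p : X × A,
      0 ≤ Qstar p - Qpik p ∧
      Qstar p - Qpik p ≤
        γ * ∑' ℓ : ℕ, γ ^ ℓ *
          ((evalDetPol P πκ)^[ℓ]
            (fun q => evalDetPol P πstar (fun q' => Qstar q' - Qhat q') q -
              evalDetPol P πκ (fun q' => Qstar q' - Qhat q') q)) p ∧
      Summable (fun ℓ : ℕ => |γ ^ ℓ *
          ((evalDetPol P πκ)^[ℓ]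
            (fun q => evalDetPol P πstar (fun q' => Qstar q' - Qhat q') q -
              evalDetPol P πκ (fun q' => Qstar q' - Qhat q') q)) p|) := by
  have hQhat : BddMeas Qhat := ⟨hQhat_meas, _, hQhat_bd⟩
  have hQstar_fix' : bellmanTdet P πstar r γ Qstar = Qstar := by
    rwa [← bellmanT_eq_bellmanTdet_of_greedy hπstar_greedy]
  have hrec :=
    sub_eq_smul_of_bellmanTdet_eq_self hπκ_meas hQstar_bm hQpik_bm hQstar_fix' hQpik_fix
  have h_nonneg : 0 ≤ evalDetPol P πstar Qstar - evalDetPol P πκ Qstar :=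
    sub_nonneg.2 (evalDetPol_le_of_greedy hπκ_meas hπstar_meas hQstar_bm hπstar_greedy)
  have hhg : evalDetPol P πstar Qstar - evalDetPol P πκ Qstar ≤
      evalDetPol P πstar (Qstar - Qhat) - evalDetPol P πκ (Qstar - Qhat) := by
    rw [evalDetPol_sub hπstar_meas hQstar_bm hQhat, evalDetPol_sub hπκ_meas hQstar_bm hQhat]
    have hgreedy := evalDetPol_le_of_greedy (P := P) hπstar_meas hπκ_meas hQhat hπκ_greedy
    intro p
    simp only [Pi.sub_apply]
    linarith [hgreedy p]
  have hh := (hQstar_bm.evalDetPol (P := P) hπstar_meas).sub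
    (hQstar_bm.evalDetPol (P := P) hπκ_meas)
  have hg := ((hQstar_bm.sub hQhat).evalDetPol (P := P) hπstar_meas).sub
    ((hQstar_bm.sub hQhat).evalDetPol (P := P) hπκ_meas)
  exact bounds_of_eq_smul_add_evalDetPol hπκ_meas hγ0.le hγ1 (hQstar_bm.sub hQpik_bm) hh hg
    h_nonneg hhg hrec

/-- pointwise on `X × A`,
`0 ≤ Q* − Q^{π_κ} ≤ γ·∑_{ℓ=0}^∞ γ^ℓ·(E^{π_κ})^ℓ((E^{π*} − E^{π_κ})(Q* − Q̂_κ))`,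
and the series converges absolutely. -/
theorem statement14
    {X A : Type*} [MeasurableSpace X]
    [Fintype A] [Nonempty A] [MeasurableSpace A] [MeasurableSingletonClass A]
    (P : Kernel (X × A) X) [IsMarkovKernel P]
    (r : X × A → ℝ) (hr_meas : Measurable r)
    (Rmax : ℝ) (hr_bd : ∀ p : X × A, |r p| ≤ Rmax)
    (γ : ℝ) (hγ0 : 0 < γ) (hγ1 : γ < 1)
    -- `Q*` is the unique bounded measurable fixed point of `T`
    (Qstar : X × A → ℝ) (hQstar_bm : BddMeas Qstar)
    (hQstar_fix : bellmanT P r γ Qstar = Qstar)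
    (hQstar_unique : ∀ Q' : X × A → ℝ, BddMeas Q' → bellmanT P r γ Q' = Q' → Q' = Qstar)
    -- `π*` is a measurable greedy policy w.r.t. `Q*`
    (πstar : X → A) (hπstar_meas : Measurable πstar)
    (hπstar_greedy : ∀ x : X, Qstar (x, πstar x) = ⨆ a : A, Qstar (x, a))
    -- `Q̂_κ` bounded measurable with `|Q̂_κ| ≤ Q_max`
    (Qhat : X × A → ℝ) (hQhat_meas : Measurable Qhat)
    (hQhat_bd : ∀ p : X × A, |Qhat p| ≤ Rmax / (1 - γ))
    -- `π_κ` is a measurable greedy policy w.r.t. `Q̂_κ`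
    (πκ : X → A) (hπκ_meas : Measurable πκ)
    (hπκ_greedy : ∀ x : X, Qhat (x, πκ x) = ⨆ a : A, Qhat (x, a))
    -- `Q^{π_κ}` is the unique bounded measurable fixed point of `T^{π_κ}`
    (Qpik : X × A → ℝ) (hQpik_bm : BddMeas Qpik)
    (hQpik_fix : bellmanTdet P πκ r γ Qpik = Qpik)
    (hQpik_unique : ∀ Q' : X × A → ℝ, BddMeas Q' →
      bellmanTdet P πκ r γ Q' = Q' → Q' = Qpik) :
    ∀ p : X × A,
      0 ≤ Qstar p - Qpik p ∧
      Qstar p - Qpik p ≤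
        γ * ∑' ℓ : ℕ, γ ^ ℓ *
          ((evalDetPol P πκ)^[ℓ]
            (fun q => evalDetPol P πstar (fun q' => Qstar q' - Qhat q') q -
              evalDetPol P πκ (fun q' => Qstar q' - Qhat q') q)) p ∧
      Summable (fun ℓ : ℕ => |γ ^ ℓ *
          ((evalDetPol P πκ)^[ℓ]
            (fun q => evalDetPol P πstar (fun q' => Qstar q' - Qhat q') q -
              evalDetPol P πκ (fun q' => Qstar q' - Qhat q') q)) p|) :=
  statement14_general P r Rmax γ hγ0 hγ1 Qstar hQstar_bm hQstar_fix πstar hπstar_meas hπstar_greedy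
    Qhat hQhat_meas hQhat_bd πκ hπκ_meas hπκ_greedy Qpik hQpik_bm hQpik_fix
end
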